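/- arXiv:2107.04065 — 2 statements merged into one kernel-verified Lean document; each statement's English description precedes it below -/
import Mathlib

section
/- Let α ∈ (0,2). There exists a constant A_α > 0 such that for every u in the weighted Sobolev space H¹_α one has |u(1)| ≤ A_α ‖u‖_{H¹_α}. Moreover one may take A_α = min over λ ∈ (0,1) of (1-λ)^(-1/2) + (1-λ)^(1/2) λ^(-α/2). -/
/-!
Fix `λ ∈ (0,1)`. Averaging `u²` over `(λ,1]` yields a point `x₀` there with
`|u(x₀)| ≤ (1-λ)^(-1/2) ‖u‖₂`. On `(λ,1]` the weight satisfies `x^α ≥ λ^α`, so Cauchy–Schwarz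
gives `|u(1) - u(x₀)| ≤ ∫_λ^1 |u'| ≤ (1-λ)^(1/2) λ^(-α/2) ‖x^(α/2) u'‖₂`. Hence
`|u(1)| ≤ A(λ) ‖u‖_{H¹_α}` for every `λ`, where `A(λ) = (1-λ)^(-1/2) + (1-λ)^(1/2) λ^(-α/2)`,
and `A` attains its minimum on `(0,1)` because it is continuous and tends to `+∞` at both ends
(at `0` because `α > 0`).
-/

open MeasureTheory intervalIntegral Set Filter Topology

theorem tendsto_one_sub_nhdsLT_one : Tendsto (fun x : ℝ ↦ 1 - x) (𝓝[<] 1) (𝓝[>] 0) := by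
  refine tendsto_nhdsWithin_of_tendsto_nhds_of_eventually_within _ ?_ ?_
  · simpa using ((continuous_sub_left (1 : ℝ)).tendsto (1 : ℝ)).mono_left nhdsWithin_le_nhds
  · filter_upwards [self_mem_nhdsWithin] with x (hx : x < 1) using sub_pos.2 hx

theorem ContinuousOn.exists_isMinOn_Ioo {f : ℝ → ℝ} {a b : ℝ} (hab : a < b)
    (hf : ContinuousOn f (Ioo a b)) (ha : Tendsto f (𝓝[>] a) atTop)
    (hb : Tendsto f (𝓝[<] b) atTop) : ∃ x ∈ Ioo a b, IsMinOn f (Ioo a b) x := by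
  obtain ⟨c, hc⟩ : (Ioo a b).Nonempty := nonempty_Ioo.2 hab
  obtain ⟨a', ha', ha'f⟩ := mem_nhdsGT_iff_exists_Ioo_subset.1 (ha.eventually_ge_atTop (f c))
  obtain ⟨b', hb', hb'f⟩ := mem_nhdsLT_iff_exists_Ioo_subset.1 (hb.eventually_ge_atTop (f c))
  have hK : Icc (min a' c) (max b' c) ⊆ Ioo a b := fun x hx ↦
    ⟨lt_of_lt_of_le (lt_min ha' hc.1) hx.1, lt_of_le_of_lt hx.2 (max_lt hb' hc.2)⟩
  obtain ⟨x, hxK, hxmin⟩ := isCompact_Icc.exists_isMinOn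
    ⟨c, min_le_right _ _, le_max_right _ _⟩ (hf.mono hK)
  refine ⟨x, hK hxK, fun y hy ↦ ?_⟩
  have hxc : f x ≤ f c := hxmin ⟨min_le_right _ _, le_max_right _ _⟩
  by_cases hyK : y ∈ Icc (min a' c) (max b' c)
  · exact hxmin hyK
  rcases not_and_or.1 hyK with hy' | hy'
  · exact hxc.trans (ha'f ⟨hy.1, (not_le.1 hy').trans_le (min_le_left _ _)⟩)
  · exact hxc.trans (hb'f ⟨(le_max_left _ _).trans_lt (not_le.1 hy'), hy.2⟩)

theorem integral_abs_le_sqrt_mul_sqrt_integral_sq {X : Type*} [MeasurableSpace X]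
    {μ : Measure X} [IsFiniteMeasure μ] {f : X → ℝ} (hf : MemLp f 2 μ) :
    ∫ x, |f x| ∂μ ≤ √(μ.real univ) * √(∫ x, f x ^ 2 ∂μ) := by
  have h := integral_mul_norm_le_Lp_mul_Lq Real.HolderConjugate.two_two
    (f := fun _ ↦ (1 : ℝ)) (by simpa using memLp_const (μ := μ) (p := 2) (1 : ℝ))
    (by simpa using hf)
  simp only [norm_one, one_mul, Real.rpow_two, one_pow, MeasureTheory.integral_const, smul_eq_mul,
    mul_one, Real.norm_eq_abs, sq_abs] at h
  simpa only [Real.sqrt_eq_rpow, one_div] using h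

theorem exists_le_setIntegral_div {f : ℝ → ℝ} {a b c : ℝ} (hac : a ≤ c) (hcb : c < b)
    (hf₀ : ∀ x ∈ Ioc a b, 0 ≤ f x) (hf : IntegrableOn f (Ioc a b)) :
    ∃ x ∈ Ioc c b, f x ≤ (∫ x in Ioc a b, f x) / (b - c) := by
  have hsub : Ioc c b ⊆ Ioc a b := Ioc_subset_Ioc_left hac
  obtain ⟨x, hx, hfx⟩ := exists_le_setAverage (μ := volume) (by simpa using hcb)
    (by simp) (hf.mono_set hsub)
  refine ⟨x, hx, hfx.trans ?_⟩
  rw [setAverage_eq, Real.volume_real_Ioc_of_le hcb.le, smul_eq_mul, inv_mul_eq_div]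
  exact div_le_div_of_nonneg_right (setIntegral_mono_set hf
    (ae_restrict_of_forall_mem measurableSet_Ioc hf₀) hsub.eventuallyLE) (sub_nonneg.2 hcb.le)

theorem abs_intervalIntegral_le_setIntegral_abs {f : ℝ → ℝ} {a b x : ℝ} (hx : x ∈ Icc a b)
    (hf : IntegrableOn f (Ioc a b)) : |∫ ξ in x..b, f ξ| ≤ ∫ ξ in Ioc a b, |f ξ| :=
  calc |∫ ξ in x..b, f ξ| ≤ ∫ ξ in x..b, |f ξ| := abs_integral_le_integral_abs hx.2
    _ = ∫ ξ in Ioc x b, |f ξ| := integral_of_le hx.2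
    _ ≤ ∫ ξ in Ioc a b, |f ξ| := setIntegral_mono_set hf.abs
        (ae_of_all _ fun _ ↦ abs_nonneg _) (Ioc_subset_Ioc_left hx.1).eventuallyLE

theorem sq_le_rpow_neg_mul_rpow_mul_sq {α lam x : ℝ} (hα : 0 ≤ α) (hlam : 0 < lam) (hx : lam ≤ x)
    (v : ℝ) : v ^ 2 ≤ lam ^ (-α) * (x ^ α * v ^ 2) := by
  rw [← mul_assoc, Real.rpow_neg hlam.le, inv_mul_eq_div]
  refine le_mul_of_one_le_left (sq_nonneg v) ((one_le_div₀ (by positivity)).2 ?_)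
  exact Real.rpow_le_rpow hlam.le hx hα

theorem abs_intervalIntegral_le_of_weighted_sq {α lam b x : ℝ} (hα : 0 ≤ α) (hlam : 0 < lam)
    (hx : x ∈ Icc lam b) {v : ℝ → ℝ} (hv : Measurable v)
    (hwv : IntegrableOn (fun x ↦ x ^ α * v x ^ 2) (Ioc lam b)) :
    |∫ ξ in x..b, v ξ| ≤ √(b - lam) * (lam ^ (-(α / 2)) * √(∫ x in Ioc lam b, x ^ α * v x ^ 2)) := by
  have hweight : ∀ x ∈ Ioc lam b, v x ^ 2 ≤ lam ^ (-α) * (x ^ α * v x ^ 2) := fun x hx ↦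
    sq_le_rpow_neg_mul_rpow_mul_sq hα hlam hx.1.le _
  have hv2 : IntegrableOn (fun x ↦ v x ^ 2) (Ioc lam b) :=
    (hwv.const_mul _).mono' (hv.pow_const 2).aestronglyMeasurable <|
      ae_restrict_of_forall_mem measurableSet_Ioc fun x hx ↦ by
        simpa only [Real.norm_eq_abs, abs_sq] using hweight x hx
  have hL2 : MemLp v 2 (volume.restrict (Ioc lam b)) :=
    (memLp_two_iff_integrable_sq hv.aestronglyMeasurable).2 hv2
  have hsq : ∫ x in Ioc lam b, v x ^ 2 ≤ lam ^ (-α) * ∫ x in Ioc lam b, x ^ α * v x ^ 2 := by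
    rw [← MeasureTheory.integral_const_mul]
    exact setIntegral_mono_on hv2 (hwv.const_mul _) measurableSet_Ioc hweight
  have hsqrt : √(lam ^ (-α)) = lam ^ (-(α / 2)) := by
    rw [Real.sqrt_eq_rpow, ← Real.rpow_mul hlam.le]
    ring_nf
  calc |∫ ξ in x..b, v ξ| ≤ ∫ ξ in Ioc lam b, |v ξ| :=
        abs_intervalIntegral_le_setIntegral_abs hx (hL2.integrable one_le_two)
    _ ≤ √(volume.real (Ioc lam b)) * √(∫ x in Ioc lam b, v x ^ 2) := by
        simpa using integral_abs_le_sqrt_mul_sqrt_integral_sq hL2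
    _ ≤ √(b - lam) * (lam ^ (-(α / 2)) * √(∫ x in Ioc lam b, x ^ α * v x ^ 2)) := by
        rw [Real.volume_real_Ioc_of_le (hx.1.trans hx.2), ← hsqrt,
          ← Real.sqrt_mul (Real.rpow_nonneg hlam.le _)]
        gcongr

noncomputable def traceConst (α lam : ℝ) : ℝ :=
  (1 - lam) ^ (-(1/2 : ℝ)) + (1 - lam) ^ ((1/2 : ℝ)) * lam ^ (-(α/2))

theorem traceConst_eq {α lam : ℝ} (hlam : lam < 1) :
    traceConst α lam = (√(1 - lam))⁻¹ + √(1 - lam) * lam ^ (-(α/2)) := by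
  rw [traceConst, Real.rpow_neg (by linarith), Real.sqrt_eq_rpow]

theorem traceConst_pos {α lam : ℝ} (hlam : lam ∈ Ioo 0 1) : 0 < traceConst α lam := by
  have h₁ : 0 < 1 - lam := sub_pos.2 hlam.2
  have h₂ : 0 ≤ lam ^ (-(α/2)) := Real.rpow_nonneg hlam.1.le _
  rw [traceConst_eq hlam.2]
  positivity

theorem continuousOn_traceConst (α : ℝ) : ContinuousOn (traceConst α) (Ioo 0 1) := by
  unfold traceConst
  refine ContinuousOn.add ?_ (ContinuousOn.mul ?_ ?_) <;>
    refine ContinuousOn.rpow_const (by fun_prop) fun x hx ↦ Or.inl ?_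
  exacts [(sub_pos.2 hx.2).ne', (sub_pos.2 hx.2).ne', hx.1.ne']

theorem tendsto_traceConst_nhdsGT_zero {α : ℝ} (hα : 0 < α) :
    Tendsto (traceConst α) (𝓝[>] 0) atTop := by
  have hone : Tendsto (fun lam : ℝ ↦ (1 - lam) ^ (1/2 : ℝ)) (𝓝[>] 0) (𝓝 1) := by
    have : ContinuousAt (fun lam : ℝ ↦ (1 - lam) ^ (1/2 : ℝ)) 0 := by fun_prop (disch := norm_num)
    simpa using this.tendsto.mono_left nhdsWithin_le_nhds
  refine Tendsto.zero_eventuallyLE_add_atTop ?_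
    (hone.pos_mul_atTop one_pos (tendsto_rpow_neg_nhdsGT_zero (by linarith)))
  filter_upwards [Ioo_mem_nhdsGT one_pos] with lam hlam
  exact Real.rpow_nonneg (sub_pos.2 hlam.2).le _

theorem tendsto_traceConst_nhdsLT_one (α : ℝ) : Tendsto (traceConst α) (𝓝[<] 1) atTop := by
  refine Tendsto.atTop_add_zero_eventuallyLE
    ((tendsto_rpow_neg_nhdsGT_zero (by norm_num)).comp tendsto_one_sub_nhdsLT_one) ?_
  filter_upwards [Ioo_mem_nhdsLT one_pos] with lam hlam
  exact mul_nonneg (Real.rpow_nonneg (sub_pos.2 hlam.2).le _) (Real.rpow_nonneg hlam.1.le _)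

theorem exists_isMinOn_traceConst {α : ℝ} (hα : 0 < α) :
    ∃ lam ∈ Ioo 0 1, IsMinOn (traceConst α) (Ioo 0 1) lam :=
  (continuousOn_traceConst α).exists_isMinOn_Ioo one_pos (tendsto_traceConst_nhdsGT_zero hα)
    (tendsto_traceConst_nhdsLT_one α)

theorem abs_le_traceConst_mul_sqrt {α lam : ℝ} (hα : 0 ≤ α) (hlam : lam ∈ Ioo 0 1)
    {u u' : ℝ → ℝ} (hu' : Measurable u') (hftc : ∀ x ∈ Ioc lam 1, u 1 - u x = ∫ ξ in x..1, u' ξ)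
    (hu : IntegrableOn (fun x ↦ u x ^ 2) (Ioc 0 1))
    (hwu' : IntegrableOn (fun x ↦ x ^ α * u' x ^ 2) (Ioc 0 1)) :
    |u 1| ≤ traceConst α lam *
      √((∫ x in Ioc 0 1, u x ^ 2) + ∫ x in Ioc 0 1, x ^ α * u' x ^ 2) := by
  set N₁ := ∫ x in Ioc (0 : ℝ) 1, u x ^ 2
  set N₂ := ∫ x in Ioc (0 : ℝ) 1, x ^ α * u' x ^ 2
  have hweight_nonneg : ∀ x ∈ Ioc (0 : ℝ) 1, 0 ≤ x ^ α * u' x ^ 2 := fun x hx ↦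
    mul_nonneg (Real.rpow_nonneg hx.1.le _) (sq_nonneg _)
  have hN₁ : 0 ≤ N₁ := setIntegral_nonneg measurableSet_Ioc fun x _ ↦ sq_nonneg (u x)
  have hN₂ : 0 ≤ N₂ := setIntegral_nonneg measurableSet_Ioc hweight_nonneg
  have hsub : Ioc lam 1 ⊆ Ioc 0 1 := Ioc_subset_Ioc_left hlam.1.le
  have hpow : 0 ≤ lam ^ (-(α / 2)) := Real.rpow_nonneg hlam.1.le _
  obtain ⟨x₀, hx₀, hux₀⟩ :=
    exists_le_setIntegral_div hlam.1.le hlam.2 (fun x _ ↦ sq_nonneg (u x)) hu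
  have hpoint : |u x₀| ≤ (√(1 - lam))⁻¹ * √N₁ := by
    rw [inv_mul_eq_div, ← Real.sqrt_div' _ (sub_pos.2 hlam.2).le]
    exact Real.abs_le_sqrt hux₀
  have hosc : |u 1 - u x₀| ≤ √(1 - lam) * (lam ^ (-(α / 2)) * √N₂) := by
    rw [hftc x₀ hx₀]
    refine (abs_intervalIntegral_le_of_weighted_sq hα hlam.1 (Ioc_subset_Icc_self hx₀) hu'
      (hwu'.mono_set hsub)).trans ?_
    gcongr
    exact setIntegral_mono_set hwu'
      (ae_restrict_of_forall_mem measurableSet_Ioc hweight_nonneg) hsub.eventuallyLE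
  have hS₁ : √N₁ ≤ √(N₁ + N₂) := Real.sqrt_le_sqrt (by linarith)
  have hS₂ : √N₂ ≤ √(N₁ + N₂) := Real.sqrt_le_sqrt (by linarith)
  calc |u 1| ≤ |u x₀| + |u 1 - u x₀| := sub_le_iff_le_add'.1 (abs_sub_abs_le_abs_sub _ _)
    _ ≤ (√(1 - lam))⁻¹ * √(N₁ + N₂) + √(1 - lam) * (lam ^ (-(α / 2)) * √(N₁ + N₂)) :=
        add_le_add (hpoint.trans (by gcongr)) (hosc.trans (by gcongr))
    _ = traceConst α lam * √(N₁ + N₂) := by rw [traceConst_eq hlam.2]; ring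

/-- there is a constant `A_α > 0` (one may take
`A_α = min_{λ∈(0,1)} (1-λ)^(-1/2) + (1-λ)^(1/2) λ^(-α/2)`) such that every `u` with
finite `H¹_α` norm (here `u` absolutely continuous on `(0,1]`, modeled via FTC with
derivative `u'`, with `u ∈ L²(0,1)` and `x^(α/2)u' ∈ L²(0,1)`) satisfies
`|u 1| ≤ A_α ‖u‖_{H¹_α}`. -/
theorem stmt4 (α : ℝ) (hα : α ∈ Set.Ioo (0:ℝ) 2) :
    ∃ A : ℝ, 0 < A ∧
      (∃ lam ∈ Set.Ioo (0:ℝ) 1,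
        A = (1 - lam) ^ (-(1/2 : ℝ)) + (1 - lam) ^ ((1/2 : ℝ)) * lam ^ (-(α/2)) ∧
        ∀ μ ∈ Set.Ioo (0:ℝ) 1,
          A ≤ (1 - μ) ^ (-(1/2 : ℝ)) + (1 - μ) ^ ((1/2 : ℝ)) * μ ^ (-(α/2))) ∧
      ∀ u u' : ℝ → ℝ,
        Measurable u' →
        (∀ x ∈ Set.Ioc (0:ℝ) 1, ∀ y ∈ Set.Ioc (0:ℝ) 1,
          IntervalIntegrable u' volume x y ∧ u y - u x = ∫ ξ in x..y, u' ξ) →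
        IntegrableOn (fun x => (u x)^2) (Set.Ioc (0:ℝ) 1) →
        IntegrableOn (fun x => x ^ α * (u' x)^2) (Set.Ioc (0:ℝ) 1) →
        |u 1| ≤ A * Real.sqrt ((∫ x in Set.Ioc (0:ℝ) 1, (u x)^2)
          + ∫ x in Set.Ioc (0:ℝ) 1, x ^ α * (u' x)^2) := by
  obtain ⟨lam, hlam, hmin⟩ := exists_isMinOn_traceConst hα.1
  refine ⟨traceConst α lam, traceConst_pos hlam, ⟨lam, hlam, rfl, fun μ hμ ↦ hmin hμ⟩, ?_⟩
  intro u u' hu' hftc hu hwu'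
  refine abs_le_traceConst_mul_sqrt hα.1.le hlam hu' (fun x hx ↦ ?_) hu hwu'
  exact (hftc x (Ioc_subset_Ioc_left hlam.1.le hx) 1 (right_mem_Ioc.2 one_pos)).2
end

section
/- Let α ∈ (0,2). There exists B_α > 0 such that for every u ∈ H²_α one has |u'(1)| ≤ B_α ‖u‖_{H²_α}. One may take B_α = min over λ ∈ (0,1) of λ^(-α/2)(1-λ)^(-1/2) + (1-λ)^(1/2) (4λ^(-2α) + 4α² λ^(-(2+α)))^(1/2). -/
open MeasureTheory intervalIntegral Set Filter Topology

/-!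
With `v x = x ^ (α/2) * u' x`, the hypothesis on `h` says `u' 1 = v x + ∫ ξ in x..1, h ξ` for every
`x ∈ (0, 1]`. Averaging this identity over `(0, 1]` and applying Cauchy–Schwarz to both terms gives
`|u'(1)| ≤ ‖v‖₂ + ‖h‖₂ ≤ 2 ‖u‖_{H²_α}`. The constant of the statement is at least `2`, since
`(1-λ)^(-1/2) + (1-λ)^(1/2) ≥ 2`, and the minimum over `λ` exists because the constant tends to
`+∞` at both ends of `(0, 1)`.
-/

theorem integral_abs_le_sqrt_measureReal_mul_sqrt_integral_sq {Ω : Type*} [MeasurableSpace Ω]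
    {μ : Measure Ω} [IsFiniteMeasure μ] {g : Ω → ℝ} (hg : MemLp g 2 μ) :
    ∫ x, |g x| ∂μ ≤ √(μ.real univ) * √(∫ x, g x ^ 2 ∂μ) := by
  have h := integral_mul_le_Lp_mul_Lq_of_nonneg .two_two
    (f := fun x => |g x|) (g := fun _ => (1 : ℝ))
    (.of_forall fun _ => abs_nonneg _) (.of_forall fun _ => zero_le_one)
    (by rw [ENNReal.ofReal_ofNat]; exact hg.abs)
    (by simpa using memLp_const (μ := μ) (p := 2) (1 : ℝ))
  have hsq : ∀ x, |g x| ^ (2 : ℝ) = g x ^ 2 := fun x => by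
    rw [show (2 : ℝ) = (2 : ℕ) by norm_num, Real.rpow_natCast, sq_abs]
  simp only [mul_one, Real.one_rpow, hsq, MeasureTheory.integral_const, smul_eq_mul] at h
  rwa [Real.sqrt_eq_rpow, Real.sqrt_eq_rpow, mul_comm]

theorem abs_le_of_forall_eq_add_intervalIntegral {a b c : ℝ} (hab : a < b) {v h : ℝ → ℝ}
    (hv : MemLp v 2 (volume.restrict (Ioc a b))) (hh : MemLp h 2 (volume.restrict (Ioc a b)))
    (hc : ∀ x ∈ Ioc a b, c = v x + ∫ ξ in x..b, h ξ) :
    |c| ≤ √(∫ x in Ioc a b, v x ^ 2) / √(b - a) + √(b - a) * √(∫ x in Ioc a b, h x ^ 2) := by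
  set t := b - a
  have ht : 0 < t := sub_pos.2 hab
  have hvol : volume.real (Ioc a b) = t := by simp [measureReal_def, hab.le, t]
  have hconst : ∀ r : ℝ, IntegrableOn (fun _ => r) (Ioc a b) := fun r =>
    integrableOn_const measure_Ioc_lt_top.ne
  have hv1 : IntegrableOn v (Ioc a b) := hv.integrable one_le_two
  have hh1 : IntegrableOn h (Ioc a b) := hh.integrable one_le_two
  have htail : ∀ x ∈ Ioc a b, |∫ ξ in x..b, h ξ| ≤ ∫ ξ in Ioc a b, |h ξ| := fun x hx => by
    rw [intervalIntegral.integral_of_le hx.2]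
    exact (norm_integral_le_integral_norm h).trans <| setIntegral_mono_set hh1.abs
      (.of_forall fun _ => abs_nonneg _) (Ioc_subset_Ioc_left hx.1.le).eventuallyLE
  have hcv : t * |c| ≤ (∫ x in Ioc a b, |v x|) + t * ∫ ξ in Ioc a b, |h ξ| := by
    calc t * |c| = ∫ _ in Ioc a b, |c| := by rw [setIntegral_const, hvol, smul_eq_mul]
      _ ≤ ∫ x in Ioc a b, (|v x| + ∫ ξ in Ioc a b, |h ξ|) :=
        setIntegral_mono_on (hconst _) (hv1.abs.add (hconst _)) measurableSet_Ioc fun x hx => by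
          rw [hc x hx]; exact (abs_add_le _ _).trans (add_le_add_right (htail x hx) _)
      _ = _ := by rw [integral_add hv1.abs (hconst _), setIntegral_const, hvol, smul_eq_mul]
  have hst : √t * √t = t := Real.mul_self_sqrt ht.le
  have hst_pos : 0 < √t := Real.sqrt_pos.2 ht
  have hCS : ∀ g : ℝ → ℝ, MemLp g 2 (volume.restrict (Ioc a b)) →
      ∫ x in Ioc a b, |g x| ≤ √t * √(∫ x in Ioc a b, g x ^ 2) := fun g hg => by
    simpa [hvol] using integral_abs_le_sqrt_measureReal_mul_sqrt_integral_sq hg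
  have key :
      t * |c| ≤ t * (√(∫ x in Ioc a b, v x ^ 2) / √t + √t * √(∫ x in Ioc a b, h x ^ 2)) := by
    calc t * |c| ≤ √t * √(∫ x in Ioc a b, v x ^ 2) + t * (√t * √(∫ x in Ioc a b, h x ^ 2)) :=
          hcv.trans (add_le_add (hCS v hv) (mul_le_mul_of_nonneg_left (hCS h hh) ht.le))
      _ = _ := by
        have htt : t / √t = √t := by rw [div_eq_iff hst_pos.ne', hst]
        rw [mul_add, show t * (√(∫ x in Ioc a b, v x ^ 2) / √t) =
          t / √t * √(∫ x in Ioc a b, v x ^ 2) by ring, htt]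
  exact le_of_mul_le_mul_left key ht

theorem exists_isMinOn_Ioo_of_tendsto_atTop {f : ℝ → ℝ} {a b : ℝ} (hab : a < b)
    (hf : ContinuousOn f (Ioo a b)) (ha : Tendsto f (𝓝[>] a) atTop)
    (hb : Tendsto f (𝓝[<] b) atTop) : ∃ c ∈ Ioo a b, IsMinOn f (Ioo a b) c := by
  obtain ⟨x₀, hx₀⟩ := nonempty_Ioo.2 hab
  obtain ⟨a', ha', hleft⟩ := mem_nhdsGT_iff_exists_Ioo_subset.1 (ha.eventually_ge_atTop (f x₀))
  obtain ⟨b', hb', hright⟩ := mem_nhdsLT_iff_exists_Ioo_subset.1 (hb.eventually_ge_atTop (f x₀))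
  have hK : Icc (min a' x₀) (max b' x₀) ⊆ Ioo a b := Icc_subset_Ioo
    (lt_min (mem_Ioi.1 ha') hx₀.1) (max_lt (mem_Iio.1 hb') hx₀.2)
  obtain ⟨c, hcK, hc⟩ := isCompact_Icc.exists_isMinOn
    ⟨x₀, min_le_right _ _, le_max_right _ _⟩ (hf.mono hK)
  have hcx₀ : f c ≤ f x₀ := hc ⟨min_le_right _ _, le_max_right _ _⟩
  refine ⟨c, hK hcK, fun y hy => ?_⟩
  rcases lt_or_ge y (min a' x₀) with hy' | hy'
  · exact hcx₀.trans (hleft ⟨hy.1, hy'.trans_le (min_le_left _ _)⟩)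
  rcases le_or_gt y (max b' x₀) with hy'' | hy''
  · exact hc ⟨hy', hy''⟩
  · exact hcx₀.trans (hright ⟨(le_max_left _ _).trans_lt hy'', hy.2⟩)

noncomputable def traceConstant (α μ : ℝ) : ℝ :=
  μ ^ (-(α/2)) * (1 - μ) ^ (-(1/2 : ℝ))
    + (1 - μ) ^ ((1/2 : ℝ)) * Real.sqrt (4 * μ ^ (-(2*α)) + 4 * α^2 * μ ^ (-(2+α)))

section traceConstant

variable {α μ : ℝ}

theorem mul_le_traceConstant (hμ : μ ≤ 1) :
    μ ^ (-(α/2)) * (1 - μ) ^ (-(1/2 : ℝ)) ≤ traceConstant α μ :=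
  le_add_of_nonneg_right (mul_nonneg (Real.rpow_nonneg (sub_nonneg.2 hμ) _) (Real.sqrt_nonneg _))

theorem two_le_traceConstant (hα : 0 ≤ α) (hμ : μ ∈ Ioo 0 1) : 2 ≤ traceConstant α μ := by
  obtain ⟨h0, h1⟩ := hμ
  have hone : ∀ {p : ℝ}, p ≤ 0 → 1 ≤ μ ^ p := fun hp =>
    Real.one_le_rpow_of_pos_of_le_one_of_nonpos h0 h1.le hp
  have hs : 0 < √(1 - μ) := Real.sqrt_pos.2 (sub_pos.2 h1)
  have hsqrt : 1 ≤ √(4 * μ ^ (-(2*α)) + 4 * α^2 * μ ^ (-(2+α))) := Real.one_le_sqrt.2 <| by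
    nlinarith [hone (p := -(2*α)) (by linarith), Real.rpow_nonneg h0.le (-(2+α)), sq_nonneg α]
  rw [traceConstant, Real.rpow_neg (sub_pos.2 h1).le, ← Real.sqrt_eq_rpow]
  calc (2 : ℝ) ≤ (√(1 - μ))⁻¹ + √(1 - μ) := by
        rw [← sub_nonneg]
        have : (√(1 - μ))⁻¹ + √(1 - μ) - 2 = (√(1 - μ) - 1) ^ 2 / √(1 - μ) := by field_simp; ring
        rw [this]; positivity
    _ ≤ _ := add_le_add (le_mul_of_one_le_left (by positivity) (hone (by linarith)))
        (le_mul_of_one_le_right hs.le hsqrt)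

theorem continuousOn_traceConstant : ContinuousOn (traceConstant α) (Ioo 0 1) := by
  intro μ hμ
  have h0 : μ ≠ 0 := hμ.1.ne'
  have h1 : 1 - μ ≠ 0 := (sub_pos.2 hμ.2).ne'
  unfold traceConstant
  exact ContinuousAt.continuousWithinAt (by fun_prop (disch := simp [*]))

theorem tendsto_traceConstant_nhdsGT_zero (hα : 0 < α) :
    Tendsto (traceConstant α) (𝓝[>] 0) atTop := by
  refine tendsto_atTop_mono' _ ?_ (tendsto_rpow_neg_nhdsGT_zero (neg_neg_of_pos (half_pos hα)))
  filter_upwards [Ioo_mem_nhdsGT one_pos] with μ hμ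
  refine le_trans ?_ (mul_le_traceConstant hμ.2.le)
  exact le_mul_of_one_le_right (Real.rpow_nonneg hμ.1.le _)
    (Real.one_le_rpow_of_pos_of_le_one_of_nonpos (by linarith [hμ.2]) (by linarith [hμ.1])
      (by norm_num))

theorem tendsto_traceConstant_nhdsLT_one (hα : 0 ≤ α) :
    Tendsto (traceConstant α) (𝓝[<] 1) atTop := by
  have hsub : Tendsto (fun μ : ℝ => 1 - μ) (𝓝[<] 1) (𝓝[>] 0) := by
    simpa using (continuous_sub_left (1 : ℝ)).continuousWithinAt.tendsto_nhdsWithin (x := 1)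
      (s := Iio 1) (t := Ioi 0) fun μ hμ => sub_pos.2 hμ
  refine tendsto_atTop_mono' _ ?_
    ((tendsto_rpow_neg_nhdsGT_zero (y := -(1/2)) (by norm_num)).comp hsub)
  filter_upwards [Ioo_mem_nhdsLT zero_lt_one] with μ hμ
  refine le_trans ?_ (mul_le_traceConstant hμ.2.le)
  exact le_mul_of_one_le_left (Real.rpow_nonneg (by linarith [hμ.2]) _)
    (Real.one_le_rpow_of_pos_of_le_one_of_nonpos hμ.1 hμ.2.le (by linarith))

end traceConstant

theorem abs_deriv_one_le_sqrt_add_sqrt {α : ℝ} {u' h : ℝ → ℝ} (hu' : Measurable u')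
    (hh : Measurable h) (hflux : ∀ x ∈ Ioc (0 : ℝ) 1, u' 1 - x ^ (α/2) * u' x = ∫ ξ in x..1, h ξ)
    (hu'2 : IntegrableOn (fun x => x ^ α * u' x ^ 2) (Ioc 0 1))
    (hh2 : IntegrableOn (fun x => h x ^ 2) (Ioc 0 1)) :
    |u' 1| ≤ √(∫ x in Ioc 0 1, x ^ α * u' x ^ 2) + √(∫ x in Ioc 0 1, h x ^ 2) := by
  have hsq : ∀ x ∈ Ioc (0 : ℝ) 1, (x ^ (α/2) * u' x) ^ 2 = x ^ α * u' x ^ 2 := fun x hx => by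
    rw [mul_pow, ← Real.rpow_mul_natCast hx.1.le]; norm_num
  have hv : MemLp (fun x => x ^ (α/2) * u' x) 2 (volume.restrict (Ioc 0 1)) :=
    (memLp_two_iff_integrable_sq ((measurable_id.pow_const _).mul hu').aestronglyMeasurable).2
      (hu'2.congr_fun (fun x hx => (hsq x hx).symm) measurableSet_Ioc)
  have hh' : MemLp h 2 (volume.restrict (Ioc 0 1)) :=
    (memLp_two_iff_integrable_sq hh.aestronglyMeasurable).2 hh2
  have key := abs_le_of_forall_eq_add_intervalIntegral zero_lt_one hv hh'
    fun x hx => eq_add_of_sub_eq' (hflux x hx)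
  simpa [setIntegral_congr_fun measurableSet_Ioc hsq] using key

/-- there is `B_α > 0` (one may take
`B_α = min_{λ∈(0,1)} λ^(-α/2)(1-λ)^(-1/2) + (1-λ)^(1/2)(4λ^(-2α)+4α²λ^(-(2+α)))^(1/2)`)
such that every `u ∈ H²_α` (modeled via derivatives `u'` and `h := (x^(α/2)u')'`,
with FTC hypotheses and the three squared norms finite) satisfies
`|u'(1)| ≤ B_α ‖u‖_{H²_α}`. -/
theorem stmt7 (α : ℝ) (hα : α ∈ Set.Ioo (0:ℝ) 2) :
    ∃ B : ℝ, 0 < B ∧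
      (∃ lam ∈ Set.Ioo (0:ℝ) 1,
        B = lam ^ (-(α/2)) * (1 - lam) ^ (-(1/2 : ℝ))
            + (1 - lam) ^ ((1/2 : ℝ))
              * Real.sqrt (4 * lam ^ (-(2*α)) + 4 * α^2 * lam ^ (-(2+α))) ∧
        ∀ μ ∈ Set.Ioo (0:ℝ) 1,
          B ≤ μ ^ (-(α/2)) * (1 - μ) ^ (-(1/2 : ℝ))
            + (1 - μ) ^ ((1/2 : ℝ))
              * Real.sqrt (4 * μ ^ (-(2*α)) + 4 * α^2 * μ ^ (-(2+α)))) ∧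
      ∀ u u' h : ℝ → ℝ,
        Measurable u' → Measurable h →
        (∀ x ∈ Set.Ioc (0:ℝ) 1, ∀ y ∈ Set.Ioc (0:ℝ) 1,
          IntervalIntegrable u' volume x y ∧ u y - u x = ∫ ξ in x..y, u' ξ) →
        (∀ x ∈ Set.Ioc (0:ℝ) 1, ∀ y ∈ Set.Ioc (0:ℝ) 1,
          IntervalIntegrable h volume x y ∧
            y ^ (α/2) * u' y - x ^ (α/2) * u' x = ∫ ξ in x..y, h ξ) →
        IntegrableOn (fun x => (u x)^2) (Set.Ioc (0:ℝ) 1) →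
        IntegrableOn (fun x => x ^ α * (u' x)^2) (Set.Ioc (0:ℝ) 1) →
        IntegrableOn (fun x => (h x)^2) (Set.Ioc (0:ℝ) 1) →
        |u' 1| ≤ B * Real.sqrt ((∫ x in Set.Ioc (0:ℝ) 1, (u x)^2)
          + (∫ x in Set.Ioc (0:ℝ) 1, x ^ α * (u' x)^2)
          + ∫ x in Set.Ioc (0:ℝ) 1, (h x)^2) := by
  obtain ⟨lam, hlam, hmin⟩ := exists_isMinOn_Ioo_of_tendsto_atTop zero_lt_one
    continuousOn_traceConstant (tendsto_traceConstant_nhdsGT_zero hα.1)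
    (tendsto_traceConstant_nhdsLT_one hα.1.le)
  have hB := two_le_traceConstant hα.1.le hlam
  refine ⟨traceConstant α lam, by linarith, ⟨lam, hlam, rfl, fun μ hμ => hmin hμ⟩, ?_⟩
  intro u u' h hu' hh _ hflux _ hu'2 hh2
  set A₁ := ∫ x in Ioc (0 : ℝ) 1, u x ^ 2
  set A₂ := ∫ x in Ioc (0 : ℝ) 1, x ^ α * u' x ^ 2
  set A₃ := ∫ x in Ioc (0 : ℝ) 1, h x ^ 2
  have hA₁ : 0 ≤ A₁ := setIntegral_nonneg measurableSet_Ioc fun x _ => sq_nonneg _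
  have hA₂ : 0 ≤ A₂ := setIntegral_nonneg measurableSet_Ioc fun x hx =>
    mul_nonneg (Real.rpow_nonneg hx.1.le _) (sq_nonneg _)
  have hA₃ : 0 ≤ A₃ := setIntegral_nonneg measurableSet_Ioc fun x _ => sq_nonneg _
  calc |u' 1| ≤ √A₂ + √A₃ := abs_deriv_one_le_sqrt_add_sqrt hu' hh
        (fun x hx => by simpa using (hflux x hx 1 (right_mem_Ioc.2 one_pos)).2) hu'2 hh2
    _ ≤ 2 * √(A₁ + A₂ + A₃) := by
        rw [two_mul]
        gcongr <;> linarith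
    _ ≤ traceConstant α lam * √(A₁ + A₂ + A₃) := by gcongr
end
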